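/- Non-negativity of the explicit system scheme: let ψ be a saturation with saturation level α. If ρ_i ≥ 0 entrywise and σ_i ≤ α for all i ∈ ℤ, and Δt ≤ Δx/(2·ψ(0)·‖u‖), then the updated values satisfy ρ_i' ≥ 0 entrywise for all i ∈ ℤ. -/

import Mathlib

/-- A *saturation* with saturation level `α > 0`: a continuous non-increasing function
`ψ : [0,∞) → ℝ` with `ψ α = 0` and `(α − s)·ψ s > 0` for every `s ≥ 0`, `s ≠ α`. -/
def IsSaturation (ψ : ℝ → ℝ) (α : ℝ) : Prop :=
  0 < α ∧ ContinuousOn ψ (Set.Ici 0) ∧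
    (∀ s₁ s₂, 0 ≤ s₁ → s₁ ≤ s₂ → ψ s₂ ≤ ψ s₁) ∧
    ψ α = 0 ∧ ∀ s, 0 ≤ s → s ≠ α → 0 < (α - s) * ψ s

/-- The minmod limiter. -/
noncomputable def minmod (a b c : ℝ) : ℝ :=
  if 0 < a ∧ 0 < b ∧ 0 < c then min a (min b c)
  else if a < 0 ∧ b < 0 ∧ c < 0 then max a (max b c)
  else 0

/-- Minmod mmSlope `(ρ_x)_i`. -/
noncomputable def mmSlope (θ Δx : ℝ) (ρ : ℤ → ℝ) (i : ℤ) : ℝ :=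
  minmod (θ * (ρ (i + 1) - ρ i) / Δx) ((ρ (i + 1) - ρ (i - 1)) / (2 * Δx))
    (θ * (ρ i - ρ (i - 1)) / Δx)

/-- East reconstruction `ρ_i^E`. -/
noncomputable def recE (θ Δx : ℝ) (ρ : ℤ → ℝ) (i : ℤ) : ℝ :=
  ρ i + Δx / 2 * mmSlope θ Δx ρ i

/-- West reconstruction `ρ_i^W`. -/
noncomputable def recW (θ Δx : ℝ) (ρ : ℤ → ℝ) (i : ℤ) : ℝ :=
  ρ i - Δx / 2 * mmSlope θ Δx ρ i


/-- Total density `σ_i = Σ_p (ρ_i)_p`. -/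
noncomputable def totalDensity {P : ℕ} (ρ : ℤ → Fin P → ℝ) (i : ℤ) : ℝ :=
  ∑ p, ρ i p

/-- Entrywise east reconstruction `(ρ_i^E)_p`. -/
noncomputable def recEV (θ Δx : ℝ) {P : ℕ} (ρ : ℤ → Fin P → ℝ) (i : ℤ) (p : Fin P) : ℝ :=
  recE θ Δx (fun j => ρ j p) i

/-- Entrywise west reconstruction `(ρ_i^W)_p`. -/
noncomputable def recWV (θ Δx : ℝ) {P : ℕ} (ρ : ℤ → Fin P → ℝ) (i : ℤ) (p : Fin P) : ℝ :=
  recW θ Δx (fun j => ρ j p) i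

/-- Numerical flux `(F_{i+1/2})_p` of the explicit system scheme (with `θ = 2`);
`u i p` denotes `(u_{i+1/2})_p` and the saturation is evaluated on the reconstructions
of the total density `σ`. -/
noncomputable def numFluxV (ψ : ℝ → ℝ) (Δx : ℝ) {P : ℕ} (ρ u : ℤ → Fin P → ℝ)
    (i : ℤ) (p : Fin P) : ℝ :=
  recEV 2 Δx ρ i p * ψ (recW 2 Δx (totalDensity ρ) (i + 1)) * max (u i p) 0 +
    recWV 2 Δx ρ (i + 1) p * ψ (recE 2 Δx (totalDensity ρ) i) * min (u i p) 0

/-- Updated cell values `(ρ_i')_p` of the explicit system scheme. -/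
noncomputable def updateExplicitV (ψ : ℝ → ℝ) (Δx Δt : ℝ) {P : ℕ} (ρ u : ℤ → Fin P → ℝ)
    (i : ℤ) (p : Fin P) : ℝ :=
  ρ i p - Δt / Δx * (numFluxV ψ Δx ρ u i p - numFluxV ψ Δx ρ u (i - 1) p)

/-- The CFL constant `γ = inf_{s ∈ [0,α)} (α − s)/(α·ψ s)`. -/
noncomputable def gammaCFL (ψ : ℝ → ℝ) (α : ℝ) : ℝ :=
  sInf ((fun s => (α - s) / (α * ψ s)) '' Set.Ico 0 α)

/-! For `θ ≤ 2` the minmod limiter keeps `ρ_i^E` between `ρ_i` and `ρ_{i+1}`, and `ρ_i^W` between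
`ρ_{i-1}` and `ρ_i`. So the reconstructions are non-negative, and those of `σ` stay in `[0, α]`,
where `0 ≤ ψ ≤ ψ(0)`. Hence the flux leaving cell `i` is at most `ρ_i^E ψ(0) ‖u‖`, the flux entering
it is at least `-ρ_i^W ψ(0) ‖u‖`, and as `ρ_i^E + ρ_i^W = 2 ρ_i` we get
`ρ_i' ≥ ρ_i (1 - 2 (Δt/Δx) ψ(0) ‖u‖) ≥ 0`. -/

open Set

lemma minmod_mem_uIcc_left (a b c : ℝ) : minmod a b c ∈ uIcc 0 a := by
  unfold minmod
  split_ifs with hpos hneg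
  · exact mem_uIcc.2 (Or.inl ⟨(lt_min hpos.1 (lt_min hpos.2.1 hpos.2.2)).le, min_le_left _ _⟩)
  · exact mem_uIcc.2 (Or.inr ⟨le_max_left _ _, (max_lt hneg.1 (max_lt hneg.2.1 hneg.2.2)).le⟩)
  · exact left_mem_uIcc

lemma minmod_mem_uIcc_right (a b c : ℝ) : minmod a b c ∈ uIcc 0 c := by
  unfold minmod
  split_ifs with hpos hneg
  · exact mem_uIcc.2 (Or.inl ⟨(lt_min hpos.1 (lt_min hpos.2.1 hpos.2.2)).le,
      (min_le_right _ _).trans (min_le_right _ _)⟩)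
  · exact mem_uIcc.2 (Or.inr ⟨(le_max_right _ _).trans (le_max_right _ _),
      (max_lt hneg.1 (max_lt hneg.2.1 hneg.2.2)).le⟩)
  · exact left_mem_uIcc

lemma const_mul_mem_uIcc_zero {s b : ℝ} (k : ℝ) (hs : s ∈ uIcc 0 b) : k * s ∈ uIcc 0 (k * b) := by
  simpa only [image_const_mul_uIcc, mul_zero] using mem_image_of_mem (k * ·) hs

lemma add_mem_uIcc_of_mem_uIcc_mul {x d s c : ℝ} (hc : c ∈ Icc 0 1)
    (hs : s ∈ uIcc 0 (c * d)) : x + s ∈ uIcc x (x + d) := by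
  have hcd : c * d ∈ uIcc 0 d := by
    simpa only [image_mul_const_uIcc, zero_mul, one_mul] using
      mem_image_of_mem (· * d) (Icc_subset_uIcc hc)
  simpa only [image_const_add_uIcc, add_zero] using
    mem_image_of_mem (x + ·) (ordConnected_uIcc.uIcc_subset left_mem_uIcc hcd hs)

lemma recE_mem_uIcc {θ Δx : ℝ} (hΔx : 0 < Δx) (hθ : θ ∈ Icc 0 2) (f : ℤ → ℝ) (i : ℤ) :
    recE θ Δx f i ∈ uIcc (f i) (f (i + 1)) := by
  have hs := const_mul_mem_uIcc_zero (Δx / 2) (minmod_mem_uIcc_left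
    (θ * (f (i + 1) - f i) / Δx) ((f (i + 1) - f (i - 1)) / (2 * Δx)) (θ * (f i - f (i - 1)) / Δx))
  rw [show Δx / 2 * (θ * (f (i + 1) - f i) / Δx) = θ / 2 * (f (i + 1) - f i) by
    field_simp] at hs
  have h := add_mem_uIcc_of_mem_uIcc_mul (x := f i) ⟨by linarith [hθ.1], by linarith [hθ.2]⟩ hs
  rwa [add_sub_cancel] at h

lemma recW_mem_uIcc {θ Δx : ℝ} (hΔx : 0 < Δx) (hθ : θ ∈ Icc 0 2) (f : ℤ → ℝ) (i : ℤ) :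
    recW θ Δx f i ∈ uIcc (f (i - 1)) (f i) := by
  have hs := const_mul_mem_uIcc_zero (-(Δx / 2)) (minmod_mem_uIcc_right
    (θ * (f (i + 1) - f i) / Δx) ((f (i + 1) - f (i - 1)) / (2 * Δx)) (θ * (f i - f (i - 1)) / Δx))
  rw [show -(Δx / 2) * (θ * (f i - f (i - 1)) / Δx) = θ / 2 * (f (i - 1) - f i) by
    field_simp; ring] at hs
  have h := add_mem_uIcc_of_mem_uIcc_mul (x := f i) ⟨by linarith [hθ.1], by linarith [hθ.2]⟩ hs
  rw [add_sub_cancel, neg_mul, ← sub_eq_add_neg] at h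
  rwa [uIcc_comm]

lemma recE_mem {θ Δx : ℝ} (hΔx : 0 < Δx) (hθ : θ ∈ Icc 0 2) {s : Set ℝ} [hs : s.OrdConnected]
    {f : ℤ → ℝ} (hf : ∀ j, f j ∈ s) (i : ℤ) : recE θ Δx f i ∈ s :=
  hs.uIcc_subset (hf i) (hf (i + 1)) (recE_mem_uIcc hΔx hθ f i)

lemma recW_mem {θ Δx : ℝ} (hΔx : 0 < Δx) (hθ : θ ∈ Icc 0 2) {s : Set ℝ} [hs : s.OrdConnected]
    {f : ℤ → ℝ} (hf : ∀ j, f j ∈ s) (i : ℤ) : recW θ Δx f i ∈ s :=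
  hs.uIcc_subset (hf (i - 1)) (hf i) (recW_mem_uIcc hΔx hθ f i)

lemma IsSaturation.mem_Icc {ψ : ℝ → ℝ} {α s : ℝ} (hψ : IsSaturation ψ α) (hs : s ∈ Icc 0 α) :
    ψ s ∈ Icc 0 (ψ 0) := by
  obtain ⟨-, -, hanti, hα, -⟩ := hψ
  exact ⟨hα ▸ hanti s α hs.1 hs.2, hanti 0 s le_rfl hs.1⟩

lemma upwind_le {a b p q u M U : ℝ} (ha : 0 ≤ a) (hb : 0 ≤ b) (hp : p ∈ Icc 0 M) (hq : 0 ≤ q)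
    (hu : |u| ≤ U) : a * p * max u 0 + b * q * min u 0 ≤ a * (M * U) := by
  have hmax : max u 0 ≤ U := max_le ((le_abs_self u).trans hu) ((abs_nonneg u).trans hu)
  have hdown : b * q * min u 0 ≤ 0 :=
    mul_nonpos_of_nonneg_of_nonpos (by positivity) (min_le_right _ _)
  have hup : p * max u 0 ≤ M * U := mul_le_mul hp.2 hmax (le_max_right _ _) (hp.1.trans hp.2)
  nlinarith

lemma neg_le_upwind {a b p q u M U : ℝ} (ha : 0 ≤ a) (hb : 0 ≤ b) (hp : 0 ≤ p) (hq : q ∈ Icc 0 M)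
    (hu : |u| ≤ U) : -(b * (M * U)) ≤ a * p * max u 0 + b * q * min u 0 := by
  have hmin : -U ≤ min u 0 := le_min (neg_le_of_abs_le hu) (neg_nonpos.2 ((abs_nonneg u).trans hu))
  have hup : 0 ≤ a * p * max u 0 := mul_nonneg (by positivity) (le_max_right _ _)
  have hdown : -(M * U) ≤ q * min u 0 := by nlinarith [hq.1, hq.2, min_le_right u 0]
  nlinarith

section ExplicitScheme

variable {ψ : ℝ → ℝ} {α Δx : ℝ} {P : ℕ} {ρ : ℤ → Fin P → ℝ}

lemma recEV_nonneg (hΔx : 0 < Δx) (hρ : ∀ i p, 0 ≤ ρ i p) (i : ℤ) (p : Fin P) :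
    0 ≤ recEV 2 Δx ρ i p :=
  recE_mem (s := Ici 0) hΔx ⟨zero_le_two, le_rfl⟩ (fun j => hρ j p) i

lemma recWV_nonneg (hΔx : 0 < Δx) (hρ : ∀ i p, 0 ≤ ρ i p) (i : ℤ) (p : Fin P) :
    0 ≤ recWV 2 Δx ρ i p :=
  recW_mem (s := Ici 0) hΔx ⟨zero_le_two, le_rfl⟩ (fun j => hρ j p) i

lemma recEV_add_recWV (θ : ℝ) (i : ℤ) (p : Fin P) :
    recEV θ Δx ρ i p + recWV θ Δx ρ i p = 2 * ρ i p := by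
  simp only [recEV, recWV, recE, recW]
  ring

lemma totalDensity_mem_Icc (hρ : ∀ i p, 0 ≤ ρ i p) (hσ : ∀ i, totalDensity ρ i ≤ α) (i : ℤ) :
    totalDensity ρ i ∈ Icc 0 α :=
  ⟨Finset.sum_nonneg fun p _ => hρ i p, hσ i⟩

variable {u : ℤ → Fin P → ℝ} {U : ℝ}

lemma numFluxV_le (hψ : IsSaturation ψ α) (hΔx : 0 < Δx) (hρ : ∀ i p, 0 ≤ ρ i p)
    (hσ : ∀ i, totalDensity ρ i ≤ α) {i : ℤ} {p : Fin P} (hu : |u i p| ≤ U) :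
    numFluxV ψ Δx ρ u i p ≤ recEV 2 Δx ρ i p * (ψ 0 * U) :=
  upwind_le (recEV_nonneg hΔx hρ i p) (recWV_nonneg hΔx hρ (i + 1) p)
    (hψ.mem_Icc (recW_mem hΔx ⟨zero_le_two, le_rfl⟩ (totalDensity_mem_Icc hρ hσ) (i + 1)))
    (hψ.mem_Icc (recE_mem hΔx ⟨zero_le_two, le_rfl⟩ (totalDensity_mem_Icc hρ hσ) i)).1 hu

lemma neg_le_numFluxV (hψ : IsSaturation ψ α) (hΔx : 0 < Δx) (hρ : ∀ i p, 0 ≤ ρ i p)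
    (hσ : ∀ i, totalDensity ρ i ≤ α) {i : ℤ} {p : Fin P} (hu : |u i p| ≤ U) :
    -(recWV 2 Δx ρ (i + 1) p * (ψ 0 * U)) ≤ numFluxV ψ Δx ρ u i p :=
  neg_le_upwind (recEV_nonneg hΔx hρ i p) (recWV_nonneg hΔx hρ (i + 1) p)
    (hψ.mem_Icc (recW_mem hΔx ⟨zero_le_two, le_rfl⟩ (totalDensity_mem_Icc hρ hσ) (i + 1))).1
    (hψ.mem_Icc (recE_mem hΔx ⟨zero_le_two, le_rfl⟩ (totalDensity_mem_Icc hρ hσ) i)) hu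

end ExplicitScheme

/-- `U` stands for `‖u‖`; any upper bound for it will do. -/
theorem explicit_system_nonnegativity
    (ψ : ℝ → ℝ) (α : ℝ) (hψ : IsSaturation ψ α)
    (Δx Δt : ℝ) (hΔx : 0 < Δx) (hΔt : 0 < Δt)
    (P : ℕ) (ρ u : ℤ → Fin P → ℝ) (U : ℝ)
    (hu : ∀ i p, |u i p| ≤ U)
    (hρ : ∀ i p, 0 ≤ ρ i p) (hσ : ∀ i, totalDensity ρ i ≤ α)
    (hCFL : Δt ≤ Δx / (2 * ψ 0 * U)) :
    ∀ i p, 0 ≤ updateExplicitV ψ Δx Δt ρ u i p := by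
  intro i p
  have hψ₀ : 0 ≤ ψ 0 := (hψ.mem_Icc ⟨le_rfl, hψ.1.le⟩).1
  have hU : 0 ≤ U := (abs_nonneg _).trans (hu i p)
  have hcfl : Δt / Δx * (2 * ψ 0 * U) ≤ 1 := by
    rw [div_mul_eq_mul_div, div_le_one hΔx]
    exact mul_le_of_le_div₀ hΔx.le (by positivity) hCFL
  have hout := numFluxV_le hψ hΔx hρ hσ (hu i p)
  have hin := neg_le_numFluxV hψ hΔx hρ hσ (hu (i - 1) p)
  rw [sub_add_cancel] at hin
  have hflux : numFluxV ψ Δx ρ u i p - numFluxV ψ Δx ρ u (i - 1) p ≤ 2 * ρ i p * (ψ 0 * U) := by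
    rw [← recEV_add_recWV 2 i p]
    linarith
  calc 0 ≤ ρ i p * (1 - Δt / Δx * (2 * ψ 0 * U)) := mul_nonneg (hρ i p) (sub_nonneg.2 hcfl)
    _ = ρ i p - Δt / Δx * (2 * ρ i p * (ψ 0 * U)) := by ring
    _ ≤ updateExplicitV ψ Δx Δt ρ u i p :=
      sub_le_sub_left (mul_le_mul_of_nonneg_left hflux (div_nonneg hΔt.le hΔx.le)) _
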